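/- arXiv:2307.05922 — 5 statements merged into one kernel-verified Lean document; each statement's English description precedes it below -/
import Mathlib

section
/- Let 0 < ε ≤ 1/4 and set α = 1/2 − ε. Let n ≥ 1 and let k be a natural number with k ≥ (3α/ε²)·log n. If X is a binomial random variable with k trials and success probability p, where 0 ≤ p ≤ α (each trial Byzantine independently with probability at most α), then the probability that X ≥ k/2 is at most 1/n. (This is the paper's Lemma 'atmostfaulty': the randomly chosen candidate committee of size k has strictly fewer than half Byzantine members with probability at least 1 − 1/n.) -/
/-- Per-term bound: for `i` in the upper tail, `q^i (1-q)^(k-i) ≤ (q(1-q))^(k/2)`. -/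
lemma atmostfaulty_term_le (q : ℝ) (h0 : 0 ≤ q) (h12 : q ≤ 1/2) (k i : ℕ)
    (hik : i ≤ k) (hi : (k : ℝ) / 2 ≤ (i : ℝ)) :
    q ^ i * (1 - q) ^ (k - i) ≤ (q * (1 - q)) ^ ((k : ℝ) / 2) := by
  have h1q : (0:ℝ) < 1 - q := by linarith
  rcases eq_or_lt_of_le h0 with hq | hq
  · -- q = 0
    rcases Nat.eq_zero_or_pos i with hi0 | hi0
    · subst hi0
      have hk0 : k = 0 := by
        have h' : (k : ℝ) ≤ 0 := by
          have : (k:ℝ)/2 ≤ 0 := by simpa using hi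
          linarith
        have : k ≤ 0 := by exact_mod_cast h'
        omega
      subst hk0
      simp
    · rw [← hq]
      have : (0:ℝ) ^ i = 0 := zero_pow (Nat.pos_iff_ne_zero.mp hi0)
      rw [this, zero_mul]
      exact Real.rpow_nonneg (by nlinarith) _
  · -- 0 < q
    have hqle : q ≤ 1 - q := by linarith
    have hki : ((k - i : ℕ) : ℝ) = (k : ℝ) - (i : ℝ) := by
      push_cast [Nat.cast_sub hik]; ring
    have ht0 : (0:ℝ) ≤ (i : ℝ) - (k : ℝ)/2 := by linarith
    calc q ^ i * (1 - q) ^ (k - i)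
        = q ^ ((i : ℝ)) * (1 - q) ^ ((k : ℝ) - (i : ℝ)) := by
          rw [← Real.rpow_natCast q i, ← Real.rpow_natCast (1-q) (k-i), hki]
      _ = q ^ ((k:ℝ)/2) * q ^ ((i:ℝ) - (k:ℝ)/2) * (1 - q) ^ ((k : ℝ) - (i : ℝ)) := by
          rw [← Real.rpow_add hq]; ring_nf
      _ ≤ q ^ ((k:ℝ)/2) * (1 - q) ^ ((i:ℝ) - (k:ℝ)/2) * (1 - q) ^ ((k : ℝ) - (i : ℝ)) := by
          have h := Real.rpow_le_rpow h0 hqle ht0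
          have hx : (0:ℝ) ≤ q ^ ((k:ℝ)/2) := Real.rpow_nonneg h0 _
          have hy : (0:ℝ) ≤ (1 - q) ^ ((k : ℝ) - (i : ℝ)) := Real.rpow_nonneg h1q.le _
          exact mul_le_mul_of_nonneg_right (mul_le_mul_of_nonneg_left h hx) hy
      _ = q ^ ((k:ℝ)/2) * (1 - q) ^ ((k:ℝ)/2) := by
          rw [mul_assoc, ← Real.rpow_add h1q]; ring_nf
      _ = (q * (1 - q)) ^ ((k : ℝ) / 2) := (Real.mul_rpow h0 h1q.le).symm

/-- Chernoff bound for the committee selection (Lemma `atmostfaulty`):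
if `X` is binomial with `k` trials and success probability `p ≤ α = 1/2 - ε`,
and `k ≥ (3α/ε²)·log n`, then `Pr[X ≥ k/2] ≤ 1/n`. -/
theorem atmostfaulty (ε : ℝ) (hε : 0 < ε) (hε' : ε ≤ 1/4)
    (n k : ℕ) (hn : 1 ≤ n)
    (hk : (3 * (1/2 - ε) / ε ^ 2) * Real.log n ≤ (k : ℝ))
    (p : ENNReal) (hp1 : p ≤ 1) (hpα : p.toReal ≤ 1/2 - ε) :
    (PMF.binomial p.toNNReal (by simpa using ENNReal.toNNReal_mono ENNReal.one_ne_top hp1) k).toOuterMeasure {i : Fin (k + 1) | (k : ℝ) / 2 ≤ ((i : ℕ) : ℝ)}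
      ≤ 1 / (n : ENNReal) := by
  have hn0 : (0:ℝ) < n := by exact_mod_cast hn
  set q := p.toReal with hqdef
  have hq0 : 0 ≤ q := ENNReal.toReal_nonneg
  have hq12 : q ≤ 1/2 := by linarith
  have h1q : (0:ℝ) < 1 - q := by linarith
  set B : ℝ := (q * (1 - q)) ^ ((k:ℝ)/2) with hBdef
  have hB0 : 0 ≤ B := Real.rpow_nonneg (mul_nonneg hq0 h1q.le) _
  have h1p : (1 - p).toReal = 1 - q := by
    rw [ENNReal.toReal_sub_of_le hp1 ENNReal.one_ne_top, ENNReal.toReal_one]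
  -- the real-number tail bound
  have hlogn : 0 ≤ Real.log n := Real.log_nonneg (by exact_mod_cast hn)
  have hklog : Real.log n ≤ 2 * ε^2 * k := by
    have hε2 : (0:ℝ) < ε^2 := by positivity
    have h2 : 3 * (1/2 - ε) * Real.log n ≤ (k:ℝ) * ε^2 := by
      have := mul_le_mul_of_nonneg_right hk hε2.le
      rw [div_mul_eq_mul_div, div_mul_eq_mul_div] at this
      calc 3 * (1/2 - ε) * Real.log n = 3 * (1/2 - ε) * Real.log n / ε^2 * ε^2 := by
            field_simp
        _ ≤ (k:ℝ) * ε^2 := by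
            apply mul_le_mul_of_nonneg_right _ hε2.le
            rw [div_le_iff₀ hε2] at this ⊢
            nlinarith [this]
    nlinarith [h2, hlogn, hε']
  have hmain : (2:ℝ)^k * B ≤ 1 / (n:ℝ) := by
    have e1 : (2:ℝ)^k * B = (4 * (q * (1-q))) ^ ((k:ℝ)/2) := by
      rw [Real.mul_rpow (by norm_num) (by nlinarith)]
      congr 1
      rw [← Real.rpow_natCast 2 k,
        show (4:ℝ) = (2:ℝ) ^ (2:ℝ) by norm_num [Real.rpow_two],
        ← Real.rpow_mul (by norm_num : (0:ℝ) ≤ 2)]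
      ring_nf
    have e2 : (4 * (q * (1-q))) ^ ((k:ℝ)/2) ≤ (1 - 4*ε^2) ^ ((k:ℝ)/2) := by
      apply Real.rpow_le_rpow (by nlinarith) (by nlinarith) (by positivity)
    have e3 : (1 - 4*ε^2) ^ ((k:ℝ)/2) ≤ Real.exp (-(4*ε^2)) ^ ((k:ℝ)/2) := by
      apply Real.rpow_le_rpow (by nlinarith) _ (by positivity)
      nlinarith [Real.add_one_le_exp (-(4*ε^2))]
    have e4 : Real.exp (-(4*ε^2)) ^ ((k:ℝ)/2) = Real.exp (-(2*ε^2*(k:ℝ))) := by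
      rw [← Real.exp_mul]; ring_nf
    have e5 : Real.exp (-(2*ε^2*(k:ℝ))) ≤ 1 / (n:ℝ) := by
      rw [show (1:ℝ)/(n:ℝ) = Real.exp (-(Real.log n)) by
        rw [Real.exp_neg, Real.exp_log hn0]; ring]
      exact Real.exp_le_exp.mpr (by linarith)
    calc (2:ℝ)^k * B = (4 * (q * (1-q))) ^ ((k:ℝ)/2) := e1
      _ ≤ (1 - 4*ε^2) ^ ((k:ℝ)/2) := e2
      _ ≤ Real.exp (-(4*ε^2)) ^ ((k:ℝ)/2) := e3
      _ = Real.exp (-(2*ε^2*(k:ℝ))) := e4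
      _ ≤ 1 / (n:ℝ) := e5
  -- per-term bound in ENNReal
  have key : ∀ i : Fin (k+1),
      Set.indicator {i : Fin (k + 1) | (k : ℝ) / 2 ≤ ((i : ℕ) : ℝ)}
        (PMF.binomial p.toNNReal (by simpa using ENNReal.toNNReal_mono ENNReal.one_ne_top hp1) k) i ≤ ENNReal.ofReal ((k.choose i : ℝ) * B) := by
    intro i
    by_cases hi : i ∈ {i : Fin (k + 1) | (k : ℝ) / 2 ≤ ((i : ℕ) : ℝ)}
    · rw [Set.indicator_of_mem hi]
      have hpn : p.toNNReal ≤ 1 := by simpa using ENNReal.toNNReal_mono ENNReal.one_ne_top hp1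
      erw [PMF.binomial_apply _ hpn]
      simp only [Fin.val_last]
      rw [ENNReal.coe_toNNReal (ne_top_of_le_ne_top ENNReal.one_ne_top hp1)]
      have hfin : p ^ (i:ℕ) * (1-p) ^ (k - (i:ℕ)) * ((k.choose i : ℕ) : ENNReal) ≠ ⊤ := by
        apply ENNReal.mul_ne_top
        apply ENNReal.mul_ne_top
        · exact ENNReal.pow_ne_top (ne_top_of_le_ne_top ENNReal.one_ne_top hp1)
        · exact ENNReal.pow_ne_top (by
            simp only [ne_eq, ENNReal.sub_eq_top_iff]
            exact fun h => ENNReal.one_ne_top h.1)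
        · exact ENNReal.natCast_ne_top _
      rw [ENNReal.le_ofReal_iff_toReal_le hfin (by positivity)]
      rw [ENNReal.toReal_mul, ENNReal.toReal_mul, ENNReal.toReal_pow, ENNReal.toReal_pow,
        h1p, ENNReal.toReal_natCast, ← hqdef]
      have hik : (i:ℕ) ≤ k := Nat.lt_succ_iff.mp i.isLt
      have := atmostfaulty_term_le q hq0 hq12 k i hik hi
      calc q ^ (i:ℕ) * (1-q) ^ (k - (i:ℕ)) * (k.choose i : ℝ)
          ≤ B * (k.choose i : ℝ) := by
            apply mul_le_mul_of_nonneg_right this (Nat.cast_nonneg _)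
        _ = (k.choose i : ℝ) * B := mul_comm _ _
    · rw [Set.indicator_of_notMem hi]; exact zero_le
  rw [PMF.toOuterMeasure_apply_fintype]
  calc ∑ i : Fin (k+1), Set.indicator {i : Fin (k + 1) | (k : ℝ) / 2 ≤ ((i : ℕ) : ℝ)}
        (PMF.binomial p.toNNReal (by simpa using ENNReal.toNNReal_mono ENNReal.one_ne_top hp1) k) i
      ≤ ∑ i : Fin (k+1), ENNReal.ofReal ((k.choose i : ℝ) * B) :=
        Finset.sum_le_sum fun i _ => key i
    _ = ENNReal.ofReal (∑ i : Fin (k+1), (k.choose i : ℝ) * B) := by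
        rw [ENNReal.ofReal_sum_of_nonneg]
        intro i _
        positivity
    _ ≤ ENNReal.ofReal (1 / (n:ℝ)) := by
        apply ENNReal.ofReal_le_ofReal
        rw [← Finset.sum_mul]
        have hsum : ∑ i : Fin (k+1), (k.choose i : ℝ) = 2^k := by
          rw [Fin.sum_univ_eq_sum_range (fun j => ((k.choose j : ℕ) : ℝ)) (k+1)]
          exact_mod_cast Nat.sum_range_choose k
        rw [hsum]
        exact hmain
    _ = 1 / (n : ENNReal) := by
        rw [ENNReal.ofReal_div_of_pos hn0, ENNReal.ofReal_one, ENNReal.ofReal_natCast]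
end

section
/- Let 0 < ε < 1/2, let n be a positive integer, let F ⊆ Fin n be a fixed set (the Byzantine nodes) with |F| ≤ (1/2 − ε)·n, and let m be a natural number with m ≤ n and m ≥ (log n)/(2ε²). If R is a uniformly random m-element subset of Fin n (the candidate committee), then the probability that |R ∩ F| ≥ m/2 is at most 1/n. -/
open Finset

lemma choose_step (N k : ℕ) : ((k:ℝ)+1) * (N.choose (k+1)) = ((N:ℝ) - k) * N.choose k := by
  rcases le_or_gt k N with h | h
  · have h1 := Nat.choose_succ_right_eq N k
    have h2 : ((N.choose (k+1) * (k+1) : ℕ) : ℝ) = ((N.choose k * (N - k) : ℕ) : ℝ) := by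
      rw [h1]
    push_cast [Nat.cast_sub h] at h2
    linarith
  · rw [Nat.choose_eq_zero_of_lt h, Nat.choose_eq_zero_of_lt (by omega)]
    simp

lemma vdm (a b m : ℕ) :
    ∑ k ∈ range (m+1), (a.choose k : ℝ) * (b.choose (m-k) : ℝ) = ((a+b).choose m : ℝ) := by
  have h := Nat.add_choose_eq a b m
  rw [Finset.Nat.sum_antidiagonal_eq_sum_range_succ_mk] at h
  rw [h]; push_cast; rfl

lemma mean_id (a b m : ℕ) :
    ((a:ℝ)+b) * ∑ k ∈ range (m+1), (k:ℝ) * ((a.choose k : ℝ) * (b.choose (m-k) : ℝ))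
      = (m:ℝ) * a * ((a+b).choose m : ℝ) := by
  rcases Nat.eq_zero_or_pos m with rfl | hm
  · simp
  rcases Nat.eq_zero_or_pos a with rfl | ha
  · have : ∀ k ∈ range (m+1), (k:ℝ) * ((Nat.choose 0 k : ℝ) * (Nat.choose b (m-k) : ℝ)) = 0 := by
      intro k hk
      rcases Nat.eq_zero_or_pos k with rfl | hk'
      · simp
      · rw [Nat.choose_eq_zero_of_lt hk']; ring
    rw [Finset.sum_congr rfl this]; simp
  obtain ⟨a', rfl⟩ : ∃ a', a = a' + 1 := ⟨a - 1, by omega⟩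
  obtain ⟨m', rfl⟩ : ∃ m', m = m' + 1 := ⟨m - 1, by omega⟩
  -- sum: reindex k = j+1
  have key : ∑ k ∈ range (m'+2), (k:ℝ) * ((Nat.choose (a'+1) k : ℝ) * (Nat.choose b (m'+1-k) : ℝ))
      = (a'+1:ℝ) * ((a'+b).choose m' : ℝ) := by
    rw [Finset.sum_range_succ'] -- peels k=0
    simp only [Nat.cast_zero, zero_mul, add_zero]
    push_cast
    have step : ∀ j ∈ range (m'+1), ((j:ℝ)+1) * ((Nat.choose (a'+1) (j+1) : ℝ) * (Nat.choose b (m'-j) : ℝ))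
        = (a'+1:ℝ) * ((Nat.choose a' j : ℝ) * (Nat.choose b (m'-j) : ℝ)) := by
      intro j hj
      have h1 : (a'+1) * a'.choose j = (a'+1).choose (j+1) * (j+1) := by
        simpa using Nat.add_one_mul_choose_eq a' j
      have h1' : ((a':ℝ)+1) * (a'.choose j : ℝ) = ((a'+1).choose (j+1) : ℝ) * ((j:ℝ)+1) := by
        exact_mod_cast h1
      nlinarith [h1']
    calc ∑ j ∈ range (m'+1), ((j:ℝ)+1) * ((Nat.choose (a'+1) (j+1) : ℝ) * (Nat.choose b (m'-j) : ℝ))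
        = ∑ j ∈ range (m'+1), (a'+1:ℝ) * ((Nat.choose a' j : ℝ) * (Nat.choose b (m'-j) : ℝ)) :=
          Finset.sum_congr rfl step
      _ = (a'+1:ℝ) * ∑ j ∈ range (m'+1), (Nat.choose a' j : ℝ) * (Nat.choose b (m'-j) : ℝ) := by
          rw [Finset.mul_sum]
      _ = (a'+1:ℝ) * ((a'+b).choose m' : ℝ) := by rw [vdm]
  rw [key]
  -- remains: (a'+1+b) * ((a'+1)*C(a'+b,m')) = (m'+1)*(a'+1)*C(a'+1+b, m'+1)
  have h3 : (a'+b+1) * (a'+b).choose m' = (a'+b+1).choose (m'+1) * (m'+1) := by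
    simpa using Nat.add_one_mul_choose_eq (a'+b) m'
  have h3' : ((a':ℝ)+(b:ℝ)+1) * ((a'+b).choose m' : ℝ) = ((a'+b+1).choose (m'+1) : ℝ) * ((m':ℝ)+1) := by
    exact_mod_cast h3
  have e : a'+1+b = a'+b+1 := by omega
  rw [e]
  push_cast at h3' ⊢
  nlinarith [h3']

lemma cheb (s : Finset ℕ) (w a b : ℕ → ℝ) (hw : ∀ i ∈ s, 0 ≤ w i)
    (hmono : ∀ i ∈ s, ∀ j ∈ s, 0 ≤ (a i - a j) * (b i - b j)) :
    (∑ i ∈ s, w i * a i) * (∑ i ∈ s, w i * b i)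
      ≤ (∑ i ∈ s, w i) * (∑ i ∈ s, w i * (a i * b i)) := by
  have key : 0 ≤ ∑ i ∈ s, ∑ j ∈ s, w i * w j * ((a i - a j) * (b i - b j)) := by
    apply Finset.sum_nonneg; intro i hi
    apply Finset.sum_nonneg; intro j hj
    exact mul_nonneg (mul_nonneg (hw i hi) (hw j hj)) (hmono i hi j hj)
  have expand : ∑ i ∈ s, ∑ j ∈ s, w i * w j * ((a i - a j) * (b i - b j))
      = 2 * ((∑ i ∈ s, w i) * (∑ i ∈ s, w i * (a i * b i))
           - (∑ i ∈ s, w i * a i) * (∑ i ∈ s, w i * b i)) := by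
    have : ∀ i ∈ s, ∑ j ∈ s, w i * w j * ((a i - a j) * (b i - b j))
        = w i * (a i * b i) * (∑ j ∈ s, w j) - w i * a i * (∑ j ∈ s, w j * b j)
          - w i * b i * (∑ j ∈ s, w j * a j) + w i * (∑ j ∈ s, w j * (a j * b j)) := by
      intro i hi
      rw [Finset.mul_sum, Finset.mul_sum, Finset.mul_sum, Finset.mul_sum,
        ← Finset.sum_sub_distrib, ← Finset.sum_sub_distrib, ← Finset.sum_add_distrib]
      apply Finset.sum_congr rfl; intro j hj; ring
    rw [Finset.sum_congr rfl this]
    rw [Finset.sum_add_distrib, Finset.sum_sub_distrib, Finset.sum_sub_distrib,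
      ← Finset.sum_mul, ← Finset.sum_mul, ← Finset.sum_mul, ← Finset.sum_mul]
    ring
  rw [expand] at key
  linarith

lemma mgf_bound (n f : ℕ) (hfn : f ≤ n) (t : ℝ) (ht : 1 ≤ t) :
    ∀ m, m ≤ n →
      ∑ k ∈ range (m+1), (f.choose k : ℝ) * ((n-f).choose (m-k) : ℝ) * t^k
        ≤ (n.choose m : ℝ) * (1 + (t-1) * (f/n))^m := by
  intro m
  induction m with
  | zero => intro _; simp
  | succ m IH =>
    intro hm1
    have hmn : m ≤ n := by omega
    have hn0 : 0 < n := by omega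
    have hn0' : (0:ℝ) < n := by exact_mod_cast hn0
    have hnm : (m:ℝ) ≤ n := by exact_mod_cast hmn
    set b := n - f with hb
    have hfb : f + b = n := by omega
    have hfbR : (f:ℝ) + b = n := by exact_mod_cast hfb
    set g : ℝ := 1 + (t-1) * (f/n) with hg
    have hg0 : 0 ≤ g := by
      have : 0 ≤ (t-1) * (f/n) := mul_nonneg (by linarith) (by positivity)
      rw [hg]; linarith
    set u : ℕ → ℝ := fun k => (f.choose k : ℝ) * (b.choose (m-k) : ℝ) with hu
    set S : ℝ := ∑ k ∈ range (m+1), u k * t^k with hS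
    set T : ℝ := ∑ k ∈ range (m+1), (k:ℝ) * (u k * t^k) with hT
    have ht0 : (0:ℝ) < t := by linarith
    have hu0 : ∀ k, 0 ≤ u k := fun k => by
      rw [hu]; positivity
    have hS0 : 0 ≤ S := by
      rw [hS]; exact Finset.sum_nonneg fun k _ => mul_nonneg (hu0 k) (by positivity)
    -- key identity
    have key : ((m:ℝ)+1) * ∑ k ∈ range (m+2), (f.choose k : ℝ) * (b.choose (m+1-k) : ℝ) * t^k
        = ((n:ℝ) - m) * S + (t-1) * ((f:ℝ) * S - T) := by
      have split : ((m:ℝ)+1) * ∑ k ∈ range (m+2), (f.choose k : ℝ) * (b.choose (m+1-k) : ℝ) * t^k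
          = (∑ k ∈ range (m+2), (k:ℝ) * ((f.choose k : ℝ) * (b.choose (m+1-k) : ℝ) * t^k))
          + (∑ k ∈ range (m+2), ((m:ℝ)+1-k) * ((f.choose k : ℝ) * (b.choose (m+1-k) : ℝ) * t^k)) := by
        rw [Finset.mul_sum, ← Finset.sum_add_distrib]
        apply Finset.sum_congr rfl; intro k hk; ring
      have hA : ∑ k ∈ range (m+2), (k:ℝ) * ((f.choose k : ℝ) * (b.choose (m+1-k) : ℝ) * t^k)
          = ∑ j ∈ range (m+1), ((f:ℝ)-j) * (u j * t^j) * t := by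
        rw [Finset.sum_range_succ']
        simp only [Nat.cast_zero, zero_mul, add_zero]
        apply Finset.sum_congr rfl
        intro j hj
        have e1 : m+1-(j+1) = m-j := by omega
        have e2 := choose_step f j
        rw [e1]
        simp only [hu]
        push_cast
        rw [pow_succ]
        linear_combination ((b.choose (m-j) : ℝ) * t^j * t) * e2
      have hB : ∑ k ∈ range (m+2), ((m:ℝ)+1-k) * ((f.choose k : ℝ) * (b.choose (m+1-k) : ℝ) * t^k)
          = ∑ k ∈ range (m+1), ((b:ℝ) - ((m:ℝ)-k)) * (u k * t^k) := by
        rw [Finset.sum_range_succ]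
        have hz : ((m:ℝ)+1-((m:ℕ)+1:ℕ)) = 0 := by push_cast; ring
        rw [hz, zero_mul, add_zero]
        apply Finset.sum_congr rfl
        intro k hk
        have hkm : k ≤ m := by simpa [Nat.lt_succ_iff] using hk
        have e1 : m+1-k = (m-k)+1 := by omega
        have e2 := choose_step b (m-k)
        have e3 : ((m-k : ℕ) : ℝ) = (m:ℝ) - k := by
          push_cast [Nat.cast_sub hkm]; ring
        rw [e3] at e2
        rw [e1]
        simp only [hu]
        linear_combination ((f.choose k : ℝ) * t^k) * e2
      rw [split, hA, hB, hS, hT]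
      simp only [Finset.mul_sum, mul_sub, ← Finset.sum_sub_distrib, ← Finset.sum_add_distrib]
      apply Finset.sum_congr rfl
      intro k hk
      have hbR : (b:ℝ) = (n:ℝ) - f := by linarith
      rw [hbR]; ring
    -- Chebyshev: T ≥ (m*f/n) * S
    have hcheb : ((m:ℝ) * f / n) * S ≤ T := by
      have h1 := cheb (range (m+1)) u (fun k => (k:ℝ)) (fun k => t^k)
        (fun i _ => hu0 i)
        (by
          intro i _ j _
          rcases le_total i j with h | h
          · have ht2 : t^i ≤ t^j := pow_le_pow_right₀ ht h
            have hi : (i:ℝ) ≤ j := by exact_mod_cast h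
            nlinarith
          · have ht2 : t^j ≤ t^i := pow_le_pow_right₀ ht h
            have hi : (j:ℝ) ≤ i := by exact_mod_cast h
            nlinarith)
      have hsum_u : ∑ i ∈ range (m+1), u i = (n.choose m : ℝ) := by
        simp only [hu]; rw [vdm f b m, hfb]
      have hmean := mean_id f b m
      rw [hfb, hfbR] at hmean
      have hsum_ku : ∑ i ∈ range (m+1), u i * (i:ℝ) = (m:ℝ) * f * (n.choose m : ℝ) / n := by
        have e : ∑ i ∈ range (m+1), u i * (i:ℝ) = ∑ k ∈ range (m+1), (k:ℝ) * u k := by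
          apply Finset.sum_congr rfl; intro k _; ring
        rw [e, eq_div_iff (ne_of_gt hn0')]
        simp only [hu] at *
        linarith [hmean]
      have hsum_tu : ∑ i ∈ range (m+1), u i * t^i = S := by rw [hS]
      have hsum_ktu : ∑ i ∈ range (m+1), u i * ((i:ℝ) * t^i) = T := by
        rw [hT]; apply Finset.sum_congr rfl; intro k _; ring
      rw [hsum_u, hsum_ku, hsum_tu, hsum_ktu] at h1
      have hC0 : (0:ℝ) < (n.choose m : ℝ) := by
        exact_mod_cast Nat.choose_pos hmn
      have e2 : (m:ℝ) * f * (n.choose m : ℝ) / n * S = (n.choose m : ℝ) * ((m:ℝ) * f / n * S) := by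
        ring
      rw [e2] at h1
      exact le_of_mul_le_mul_left h1 hC0
    -- combine
    have hfS : (f:ℝ)*S - T ≤ (f:ℝ)*S*(((n:ℝ)-m)/n) := by
      have e : (f:ℝ)*S - ((m:ℝ) * f / n) * S = (f:ℝ)*S*(((n:ℝ)-m)/n) := by
        field_simp
      linarith [hcheb, e.symm.le]
    have hstep : ((m:ℝ)+1) * ∑ k ∈ range (m+2), (f.choose k : ℝ) * (b.choose (m+1-k) : ℝ) * t^k
        ≤ ((m:ℝ)+1) * ((n.choose (m+1) : ℝ) * g^(m+1)) := by
      rw [key]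
      have s1 : (t-1) * ((f:ℝ)*S - T) ≤ (t-1) * ((f:ℝ)*S*(((n:ℝ)-m)/n)) :=
        mul_le_mul_of_nonneg_left hfS (by linarith)
      have s2 : ((n:ℝ) - m) * S + (t-1) * ((f:ℝ)*S*(((n:ℝ)-m)/n)) = (((n:ℝ)-m) * g) * S := by
        rw [hg]; field_simp
      have s3 : (((n:ℝ)-m) * g) * S ≤ (((n:ℝ)-m) * g) * ((n.choose m : ℝ) * g^m) :=
        mul_le_mul_of_nonneg_left (IH hmn) (mul_nonneg (by linarith) hg0)
      have s4 : (((n:ℝ)-m) * g) * ((n.choose m : ℝ) * g^m) = ((m:ℝ)+1) * ((n.choose (m+1) : ℝ) * g^(m+1)) := by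
        have := choose_step n m
        rw [pow_succ]
        linear_combination (g^m * g) * this.symm
      calc ((n:ℝ) - m) * S + (t-1) * ((f:ℝ) * S - T)
          ≤ ((n:ℝ) - m) * S + (t-1) * ((f:ℝ)*S*(((n:ℝ)-m)/n)) := by linarith [s1]
        _ = (((n:ℝ)-m) * g) * S := s2
        _ ≤ (((n:ℝ)-m) * g) * ((n.choose m : ℝ) * g^m) := s3
        _ = ((m:ℝ)+1) * ((n.choose (m+1) : ℝ) * g^(m+1)) := s4
    have hfinal := le_of_mul_le_mul_left (by
        have e : (0:ℝ) < (m:ℝ)+1 := by positivity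
        exact hstep) (show (0:ℝ) < (m:ℝ)+1 by positivity)
    exact hfinal

lemma count_inter (n m k : ℕ) (hk : k ≤ m) (F : Finset (Fin n)) :
    ((powersetCard m (univ : Finset (Fin n))).filter (fun s => (s ∩ F).card = k)).card
      = F.card.choose k * (n - F.card).choose (m - k) := by
  have key : ((powersetCard m (univ : Finset (Fin n))).filter (fun s => (s ∩ F).card = k)).card
      = ((powersetCard k F) ×ˢ (powersetCard (m-k) Fᶜ)).card := by
    apply Finset.card_bij' (fun s _ => (s ∩ F, s \ F))
      (fun p _ => p.1 ∪ p.2)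
    · intro s hs
      simp only [Finset.mem_filter, Finset.mem_powersetCard] at hs
      obtain ⟨⟨hsub, hcard⟩, hik⟩ := hs
      simp only [Finset.mem_product, Finset.mem_powersetCard]
      refine ⟨⟨inter_subset_right, hik⟩, ⟨?_, ?_⟩⟩
      · intro x hx
        simp only [Finset.mem_sdiff] at hx
        simp [Finset.mem_compl, hx.2]
      · have := Finset.card_inter_add_card_sdiff s F
        omega
    · intro p hp
      simp only [Finset.mem_product, Finset.mem_powersetCard] at hp
      obtain ⟨⟨h1, h2⟩, h3, h4⟩ := hp
      simp only [Finset.mem_filter, Finset.mem_powersetCard]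
      have hdisj : Disjoint p.1 p.2 := by
        apply Finset.disjoint_left.mpr
        intro x hx1 hx2
        exact (Finset.mem_compl.mp (h3 hx2)) (h1 hx1)
      constructor
      · refine ⟨Finset.subset_univ _, ?_⟩
        rw [Finset.card_union_of_disjoint hdisj, h2, h4]
        omega
      · have : (p.1 ∪ p.2) ∩ F = p.1 := by
          ext x
          simp only [Finset.mem_inter, Finset.mem_union]
          constructor
          · rintro ⟨hx | hx, hxF⟩
            · exact hx
            · exact absurd hxF (Finset.mem_compl.mp (h3 hx))
          · intro hx; exact ⟨Or.inl hx, h1 hx⟩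
        rw [this, h2]
    · intro s hs
      simp only [Finset.mem_filter, Finset.mem_powersetCard] at hs
      ext x
      simp only [Finset.mem_union, Finset.mem_inter, Finset.mem_sdiff]
      by_cases hxF : x ∈ F <;> simp [hxF] <;> tauto
    · intro p hp
      simp only [Finset.mem_product, Finset.mem_powersetCard] at hp
      obtain ⟨⟨h1, h2⟩, h3, h4⟩ := hp
      have e1 : (p.1 ∪ p.2) ∩ F = p.1 := by
        ext x
        simp only [Finset.mem_inter, Finset.mem_union]
        constructor
        · rintro ⟨hx | hx, hxF⟩
          · exact hx
          · exact absurd hxF (Finset.mem_compl.mp (h3 hx))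
        · intro hx; exact ⟨Or.inl hx, h1 hx⟩
      have e2 : (p.1 ∪ p.2) \ F = p.2 := by
        ext x
        simp only [Finset.mem_sdiff, Finset.mem_union]
        constructor
        · rintro ⟨hx | hx, hxF⟩
          · exact absurd (h1 hx) hxF
          · exact hx
        · intro hx; exact ⟨Or.inr hx, Finset.mem_compl.mp (h3 hx)⟩
      rw [e1, e2]
  rw [key, Finset.card_product, Finset.card_powersetCard, Finset.card_powersetCard,
    Finset.card_compl]
  simp [Fintype.card_fin]

/-- Sampling-without-replacement committee selection: a uniformly random
`m`-element subset `R` of `Fin n` satisfies `Pr[|R ∩ F| ≥ m/2] ≤ 1/n`,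
where `F` is a fixed set of Byzantine nodes of size at most `(1/2 - ε)·n`
and `m ≥ (log n)/(2ε²)`. -/
theorem committee_honest_majority (ε : ℝ) (hε : 0 < ε) (hε' : ε < 1/2)
    (n : ℕ) (hn : 0 < n) (F : Finset (Fin n))
    (hF : (F.card : ℝ) ≤ (1/2 - ε) * n)
    (m : ℕ) (hmn : m ≤ n) (hm : Real.log n / (2 * ε ^ 2) ≤ (m : ℝ)) :
    (((Finset.powersetCard m (Finset.univ : Finset (Fin n))).filter
          (fun s => (m : ℝ) / 2 ≤ ((s ∩ F).card : ℝ))).card : ℝ)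
        / ((Finset.powersetCard m (Finset.univ : Finset (Fin n))).card : ℝ)
      ≤ 1 / n := by
  set t : ℝ := (1/2 + ε) / (1/2 - ε) with htdef
  have hhalf : (0:ℝ) < 1/2 - ε := by linarith
  have ht1 : 1 ≤ t := by
    rw [htdef, le_div_iff₀ hhalf]; linarith
  have ht0 : (0:ℝ) < t := by linarith
  have hn' : (0:ℝ) < n := by exact_mod_cast hn
  set f := F.card with hf
  have hfn : f ≤ n := by
    calc f ≤ Fintype.card (Fin n) := Finset.card_le_univ F
      _ = n := Fintype.card_fin n
  -- MGF bound over subsets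
  have hsubsum : ∑ s ∈ powersetCard m (univ : Finset (Fin n)), t^((s ∩ F).card)
      = ∑ k ∈ range (m+1), (f.choose k : ℝ) * ((n-f).choose (m-k) : ℝ) * t^k := by
    rw [← Finset.sum_fiberwise_of_maps_to (g := fun s => (s ∩ F).card)
        (t := range (m+1)) (fun s hs => by
          simp only [Finset.mem_powersetCard] at hs
          simp only [Finset.mem_range]
          have : (s ∩ F).card ≤ s.card := Finset.card_le_card inter_subset_left
          omega) (fun s => t^((s ∩ F).card))]
    apply Finset.sum_congr rfl
    intro k hk
    have hkm : k ≤ m := by simpa [Nat.lt_succ_iff] using hk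
    have : ∑ s ∈ (powersetCard m (univ : Finset (Fin n))).filter (fun s => (s ∩ F).card = k),
        t^((s ∩ F).card) = ∑ s ∈ (powersetCard m (univ : Finset (Fin n))).filter
          (fun s => (s ∩ F).card = k), t^k := by
      apply Finset.sum_congr rfl
      intro s hs
      rw [(Finset.mem_filter.mp hs).2]
    rw [this, Finset.sum_const, count_inter n m k hkm F, nsmul_eq_mul]
    push_cast
    ring
  have hp : (f:ℝ)/n ≤ 1/2 - ε := by
    rw [div_le_iff₀ hn']; exact hF
  have hgb : 1 + (t-1) * ((f:ℝ)/n) ≤ 1 + 2*ε := by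
    have h1 : 0 ≤ t - 1 := by linarith
    have h2 : (t-1) * ((f:ℝ)/n) ≤ (t-1) * (1/2 - ε) :=
      mul_le_mul_of_nonneg_left hp h1
    have hmul : t * (1/2 - ε) = 1/2 + ε := by
      rw [htdef, div_mul_cancel₀ _ (ne_of_gt hhalf)]
    have h3 : (t-1) * (1/2 - ε) = 2*ε := by linear_combination hmul
    linarith
  have hCm0 : (0:ℝ) < (n.choose m : ℝ) := by exact_mod_cast Nat.choose_pos hmn
  have hmgf : ∑ s ∈ powersetCard m (univ : Finset (Fin n)), t^((s ∩ F).card)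
      ≤ (n.choose m : ℝ) * (1 + 2*ε)^m := by
    rw [hsubsum]
    calc ∑ k ∈ range (m+1), (f.choose k : ℝ) * ((n-f).choose (m-k) : ℝ) * t^k
        ≤ (n.choose m : ℝ) * (1 + (t-1) * ((f:ℝ)/n))^m := mgf_bound n f hfn t ht1 m hmn
      _ ≤ (n.choose m : ℝ) * (1 + 2*ε)^m := by
          apply mul_le_mul_of_nonneg_left _ (le_of_lt hCm0)
          have hb0 : 0 ≤ 1 + (t-1) * ((f:ℝ)/n) := by
            have : 0 ≤ (t-1) * ((f:ℝ)/n) := mul_nonneg (by linarith) (by positivity)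
            linarith
          exact pow_le_pow_left₀ hb0 hgb m
  -- Markov
  set Bad := (powersetCard m (univ : Finset (Fin n))).filter
      (fun s => (m : ℝ) / 2 ≤ ((s ∩ F).card : ℝ)) with hBad
  have hMarkov : (Bad.card : ℝ) * t ^ ((m:ℝ)/2) ≤ (n.choose m : ℝ) * (1 + 2*ε)^m := by
    have h1 : (Bad.card : ℝ) * t ^ ((m:ℝ)/2) = ∑ s ∈ Bad, t ^ ((m:ℝ)/2) := by
      rw [Finset.sum_const, nsmul_eq_mul]
    rw [h1]
    calc ∑ s ∈ Bad, t ^ ((m:ℝ)/2) ≤ ∑ s ∈ Bad, t ^ ((s ∩ F).card) := by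
          apply Finset.sum_le_sum
          intro s hs
          have hs2 := (Finset.mem_filter.mp hs).2
          calc t ^ ((m:ℝ)/2) ≤ t ^ (((s ∩ F).card : ℕ) : ℝ) :=
                Real.rpow_le_rpow_of_exponent_le ht1 hs2
            _ = t ^ ((s ∩ F).card) := Real.rpow_natCast t _
      _ ≤ ∑ s ∈ powersetCard m (univ : Finset (Fin n)), t ^ ((s ∩ F).card) := by
          apply Finset.sum_le_sum_of_subset_of_nonneg (Finset.filter_subset _ _)
          intro s _ _
          positivity
      _ ≤ (n.choose m : ℝ) * (1 + 2*ε)^m := hmgf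
  -- numeric: (1+2ε)^m / t^(m/2) ≤ 1/n
  have hnum : (1 + 2*ε)^m / t ^ ((m:ℝ)/2) ≤ 1/n := by
    have hc : (0:ℝ) < 1 - 4*ε^2 := by nlinarith
    have hb0 : (0:ℝ) < 1 + 2*ε := by linarith
    have he : (1 + 2*ε)^m / t ^ ((m:ℝ)/2) = (1 - 4*ε^2) ^ ((m:ℝ)/2) := by
      have e1 : (1 + 2*ε)^m = ((1 + 2*ε)^2) ^ ((m:ℝ)/2) := by
        calc (1 + 2*ε)^m = (1 + 2*ε) ^ ((m:ℕ):ℝ) := (Real.rpow_natCast _ m).symm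
          _ = (1 + 2*ε) ^ ((2:ℝ) * ((m:ℝ)/2)) := by congr 1; ring
          _ = ((1 + 2*ε) ^ (2:ℝ)) ^ ((m:ℝ)/2) := Real.rpow_mul hb0.le 2 ((m:ℝ)/2)
          _ = ((1 + 2*ε)^2) ^ ((m:ℝ)/2) := by
              rw [show (2:ℝ) = ((2:ℕ):ℝ) by norm_num, Real.rpow_natCast]
      have e2 : (1 + 2*ε)^2 / t = 1 - 4*ε^2 := by
        rw [htdef, div_div_eq_mul_div, div_eq_iff (by positivity : (1/2 + ε : ℝ) ≠ 0)]
        ring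
      rw [e1, ← Real.div_rpow (by positivity) ht0.le, e2]
    rw [he]
    have h5 : (1 - 4*ε^2) ^ ((m:ℝ)/2) ≤ (Real.exp (-(4*ε^2))) ^ ((m:ℝ)/2) := by
      apply Real.rpow_le_rpow hc.le _ (by positivity)
      have := Real.add_one_le_exp (-(4*ε^2))
      linarith
    have h6 : (Real.exp (-(4*ε^2))) ^ ((m:ℝ)/2) = Real.exp (-(4*ε^2) * ((m:ℝ)/2)) :=
      (Real.exp_mul _ _).symm
    have h7 : Real.exp (-(4*ε^2) * ((m:ℝ)/2)) ≤ Real.exp (- Real.log n) := by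
      apply Real.exp_le_exp.mpr
      have h8 : Real.log n ≤ (m:ℝ) * (2 * ε^2) := by
        have hε2 : (0:ℝ) < 2 * ε^2 := by positivity
        rw [div_le_iff₀ hε2] at hm
        linarith
      nlinarith
    have h9 : Real.exp (- Real.log n) = 1/n := by
      rw [Real.exp_neg, Real.exp_log hn']
      exact (one_div _).symm
    calc (1 - 4*ε^2) ^ ((m:ℝ)/2) ≤ (Real.exp (-(4*ε^2))) ^ ((m:ℝ)/2) := h5
      _ = Real.exp (-(4*ε^2) * ((m:ℝ)/2)) := h6
      _ ≤ Real.exp (- Real.log n) := h7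
      _ = 1/n := h9
  -- finish
  have hD : (((powersetCard m (univ : Finset (Fin n))).card : ℕ) : ℝ) = (n.choose m : ℝ) := by
    rw [Finset.card_powersetCard, Finset.card_univ, Fintype.card_fin]
  have htpos : 0 < t ^ ((m:ℝ)/2) := Real.rpow_pos_of_pos ht0 _
  have hBadle : (Bad.card : ℝ) ≤ (n.choose m : ℝ) * (1/n) := by
    have h4 : (Bad.card : ℝ) ≤ (n.choose m : ℝ) * (1 + 2*ε)^m / t ^ ((m:ℝ)/2) := by
      rw [le_div_iff₀ htpos]; exact hMarkov
    calc (Bad.card : ℝ) ≤ (n.choose m : ℝ) * (1 + 2*ε)^m / t ^ ((m:ℝ)/2) := h4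
      _ = (n.choose m : ℝ) * ((1 + 2*ε)^m / t ^ ((m:ℝ)/2)) := by ring
      _ ≤ (n.choose m : ℝ) * (1/n) := mul_le_mul_of_nonneg_left hnum hCm0.le
  rw [hD, div_le_iff₀ hCm0]
  calc (Bad.card : ℝ) ≤ (n.choose m : ℝ) * (1/n) := hBadle
    _ = 1/n * (n.choose m : ℝ) := by ring
end

section
/- Let n ≥ 1024 be an integer, let H ⊆ Fin n be a fixed set (the honest nodes) with |H| ≥ n/2, and let m be a natural number with m ≤ n and m ≥ 2·√(n·log n). If R and S are two independent uniformly random m-element subsets of Fin n (the referee sets sampled by two candidate nodes), then the probability that R ∩ S ∩ H is nonempty is at least 1 − 2/n. (This is the paper's Lemma 'common-referee': any pair of candidate nodes have at least one common non-faulty referee node with high probability.) -/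
open Finset


lemma aux_choose_id (t m : ℕ) : (t+1) * t.choose m = (t+1).choose m * (t+1 - m) := by
  rw [← Nat.choose_succ_right_eq]
  exact Nat.add_one_mul_choose_eq t m

lemma aux_choose_shrink (n m : ℕ) (hn : 0 < n) (hm : m ≤ n) :
    ∀ j, j ≤ n → ((n-j).choose m : ℝ) ≤ (((n:ℝ)-m)/n)^j * n.choose m := by
  have hn0 : (0:ℝ) < n := by exact_mod_cast hn
  have hmr : (m:ℝ) ≤ n := by exact_mod_cast hm
  have hnm : (0:ℝ) ≤ ((n:ℝ)-m)/n := by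
    apply div_nonneg _ (by positivity); linarith
  intro j
  induction j with
  | zero => simp
  | succ j ih =>
    intro hj
    have ihj := ih (by omega)
    have hs1 : 1 ≤ n - j := by omega
    have hstep : ((n - (j+1)).choose m : ℝ) ≤ ((n:ℝ)-m)/n * ((n-j).choose m) := by
      have hid : (n-j) * (n-j-1).choose m = (n-j).choose m * ((n-j) - m) := by
        obtain ⟨t, ht⟩ : ∃ t, n - j = t+1 := ⟨n-j-1, by omega⟩
        rw [ht]; simpa using aux_choose_id t m
      have hsub : n - (j+1) = n - j - 1 := by omega
      rw [hsub]
      by_cases hms : m ≤ n - j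
      · have hs0 : (0:ℝ) < ((n-j : ℕ):ℝ) := by exact_mod_cast hs1
        have key : ((n-j-1).choose m : ℝ) * ((n-j:ℕ):ℝ)
            = ((n-j).choose m : ℝ) * (((n-j:ℕ):ℝ) - m) := by
          have := congrArg (Nat.cast : ℕ → ℝ) hid
          push_cast [Nat.cast_sub hms] at this
          linarith
        have hcast : ((n-j-1).choose m : ℝ)
            = ((n-j).choose m : ℝ) * (((n-j:ℕ):ℝ) - m) / ((n-j:ℕ):ℝ) := by
          rw [eq_div_iff (ne_of_gt hs0)]; exact key
        rw [hcast, div_le_iff₀ hs0]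
        have hsn : ((n-j:ℕ):ℝ) ≤ n := by exact_mod_cast Nat.sub_le n j
        have hch : (0:ℝ) ≤ ((n-j).choose m : ℝ) := by positivity
        have hmr0 : (0:ℝ) ≤ (m:ℝ) := by positivity
        rw [div_mul_eq_mul_div, div_mul_eq_mul_div, le_div_iff₀ hn0]
        nlinarith [mul_nonneg hch hmr0]
      · have hz : (n-j-1).choose m = 0 := Nat.choose_eq_zero_of_lt (by omega)
        rw [hz]; push_cast; positivity
    calc ((n - (j+1)).choose m : ℝ) ≤ ((n:ℝ)-m)/n * ((n-j).choose m) := hstep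
      _ ≤ ((n:ℝ)-m)/n * ((((n:ℝ)-m)/n)^j * n.choose m) :=
          mul_le_mul_of_nonneg_left ihj hnm
      _ = (((n:ℝ)-m)/n)^(j+1) * n.choose m := by ring


lemma aux_card_fiber (n m j : ℕ) (H : Finset (Fin n)) (hj : j ≤ m) :
    ((Finset.powersetCard m (Finset.univ : Finset (Fin n))).filter
        (fun R => (R ∩ H).card = j)).card
      = H.card.choose j * (n - H.card).choose (m - j) := by
  have hcompl : (Hᶜ : Finset (Fin n)).card = n - H.card := by
    rw [Finset.card_compl, Fintype.card_fin]
  rw [← hcompl, ← Finset.card_powersetCard j H, ← Finset.card_powersetCard (m-j) Hᶜ,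
    ← Finset.card_product]
  apply Finset.card_nbij' (fun R => (R ∩ H, R \ H)) (fun PQ => PQ.1 ∪ PQ.2)
  · intro R hR
    simp only [Finset.mem_coe, Finset.mem_filter, Finset.mem_powersetCard] at hR
    obtain ⟨⟨_, hcard⟩, hcj⟩ := hR
    simp only [Finset.mem_coe, Finset.mem_product, Finset.mem_powersetCard]
    refine ⟨⟨Finset.inter_subset_right, hcj⟩, ⟨fun x hx => ?_, ?_⟩⟩
    · simp only [Finset.mem_sdiff] at hx
      simpa using hx.2
    · have := Finset.card_inter_add_card_sdiff R H
      omega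
  · intro PQ hPQ
    simp only [Finset.mem_coe, Finset.mem_product, Finset.mem_powersetCard] at hPQ
    obtain ⟨⟨hP, hPc⟩, hQ, hQc⟩ := hPQ
    have hdisj : Disjoint PQ.1 PQ.2 := by
      apply Finset.disjoint_left.mpr
      intro x hxP hxQ
      have h' := hQ hxQ
      simp only [Finset.mem_compl] at h'
      exact h' (hP hxP)
    simp only [Finset.mem_coe, Finset.mem_filter, Finset.mem_powersetCard]
    have hunion : PQ.1 ∩ H = PQ.1 ∧ PQ.2 ∩ H = ∅ := by
      constructor
      · exact Finset.inter_eq_left.mpr hP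
      · apply Finset.eq_empty_iff_forall_notMem.mpr
        intro x hx
        simp only [Finset.mem_inter] at hx
        have h' := hQ hx.1
        simp only [Finset.mem_compl] at h'
        exact h' hx.2
    refine ⟨⟨Finset.subset_univ _, ?_⟩, ?_⟩
    · rw [Finset.card_union_of_disjoint hdisj, hPc, hQc]; omega
    · rw [Finset.union_inter_distrib_right, hunion.1, hunion.2, Finset.union_empty, hPc]
  · intro R _
    ext x
    simp only [Finset.mem_union, Finset.mem_inter, Finset.mem_sdiff]
    tauto
  · intro PQ hPQ
    simp only [Finset.mem_coe, Finset.mem_product, Finset.mem_powersetCard] at hPQ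
    obtain ⟨⟨hP, hPc⟩, hQ, hQc⟩ := hPQ
    have h1 : (PQ.1 ∪ PQ.2) ∩ H = PQ.1 := by
      rw [Finset.union_inter_distrib_right, Finset.inter_eq_left.mpr hP]
      have : PQ.2 ∩ H = ∅ := by
        apply Finset.eq_empty_iff_forall_notMem.mpr
        intro x hx
        simp only [Finset.mem_inter] at hx
        have h' := hQ hx.1
        simp only [Finset.mem_compl] at h'
        exact h' hx.2
      rw [this, Finset.union_empty]
    have h2 : (PQ.1 ∪ PQ.2) \ H = PQ.2 := by
      ext x
      simp only [Finset.mem_sdiff, Finset.mem_union]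
      constructor
      · rintro ⟨hx1 | hx2, hxH⟩
        · exact absurd (hP hx1) hxH
        · exact hx2
      · intro hx2
        have h' := hQ hx2
        simp only [Finset.mem_compl] at h'
        exact ⟨Or.inr hx2, h'⟩
    beta_reduce
    rw [h1, h2]


-- step: 100 * c_i ≤ 51 * c_{i+1}
lemma aux_step (n h b m i J : ℕ) (hhb : h + b = n) (hbh : b ≤ h) (hmn : m ≤ n)
    (hiJ : i + 1 ≤ J) (hJ : 3*J ≤ m) (hib : m ≤ b + i + 1) :
    100 * (h.choose i * b.choose (m - i)) ≤ 51 * (h.choose (i+1) * b.choose (m - i - 1)) := by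
  have him : 3*i + 3 ≤ m := by omega
  have hih : i + 1 ≤ h := by omega
  -- cross identity: c_{i+1} * ((i+1)*(b-(m-i-1))) = c_i * ((h-i)*(m-i))
  have id1 : h.choose (i+1) * (i+1) = h.choose i * (h - i) := Nat.choose_succ_right_eq h i
  have id2 : b.choose (m-i) * (m-i) = b.choose (m-i-1) * (b - (m-i-1)) := by
    have : m - i = (m-i-1) + 1 := by omega
    rw [this]
    have := Nat.choose_succ_right_eq b (m-i-1)
    simpa using this
  have key : h.choose (i+1) * b.choose (m-i-1) * ((i+1) * (b - (m-i-1)))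
      = h.choose i * b.choose (m-i) * ((h-i) * (m-i)) := by
    calc h.choose (i+1) * b.choose (m-i-1) * ((i+1) * (b - (m-i-1)))
        = (h.choose (i+1) * (i+1)) * (b.choose (m-i-1) * (b - (m-i-1))) := by ring
      _ = (h.choose i * (h-i)) * (b.choose (m-i) * (m-i)) := by rw [id1, ← id2]
      _ = h.choose i * b.choose (m-i) * ((h-i) * (m-i)) := by ring
  -- numeric: 100 * ((i+1)*(b-(m-i-1))) ≤ 51 * ((h-i)*(m-i))
  have hnum : 100 * ((i+1) * (b - (m-i-1))) ≤ 51 * ((h-i) * (m-i)) := by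
    have e1 : (b : ℤ) - (m - i - 1 : ℕ) = b + i + 1 - m := by
      have : (m - i - 1 : ℕ) = (m : ℤ) - i - 1 := by push_cast; omega
      omega
    zify
    rw [show ((b - (m-i-1) : ℕ) : ℤ) = (b:ℤ) + i + 1 - m by omega,
      show ((h - i : ℕ) : ℤ) = (h:ℤ) - i by omega,
      show ((m - i : ℕ) : ℤ) = (m:ℤ) - i by omega]
    nlinarith [sq_nonneg ((i:ℤ)+1), mul_nonneg (by omega : (0:ℤ) ≤ (i:ℤ)+1) (by omega : (0:ℤ) ≤ (m:ℤ) - 3*i - 3),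
      mul_nonneg (by omega : (0:ℤ) ≤ (h:ℤ) - b) (by omega : (0:ℤ) ≤ (i:ℤ)+1)]
  -- combine
  have hpos : 0 < (h - i) * (m - i) := by
    apply Nat.mul_pos <;> omega
  have final : 100 * (h.choose i * b.choose (m-i)) * ((h-i)*(m-i))
      ≤ 51 * (h.choose (i+1) * b.choose (m-i-1)) * ((h-i)*(m-i)) := by
    calc 100 * (h.choose i * b.choose (m-i)) * ((h-i)*(m-i))
        = (h.choose (i+1) * b.choose (m-i-1)) * (100 * ((i+1) * (b - (m-i-1)))) := by
          rw [show (h.choose (i+1) * b.choose (m-i-1)) * (100 * ((i+1) * (b - (m-i-1))))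
            = 100 * (h.choose (i+1) * b.choose (m-i-1) * ((i+1) * (b - (m-i-1)))) by ring, key]
          ring
      _ ≤ (h.choose (i+1) * b.choose (m-i-1)) * (51 * ((h-i) * (m-i))) :=
          Nat.mul_le_mul_left _ hnum
      _ = 51 * (h.choose (i+1) * b.choose (m-i-1)) * ((h-i)*(m-i)) := by ring
  exact Nat.le_of_mul_le_mul_right final hpos

lemma aux_chain (n h b m J : ℕ) (hhb : h + b = n) (hbh : b ≤ h) (hmn : m ≤ n) (hJ : 3*J ≤ m)
    (j : ℕ) (hjb : m ≤ b + j + 1) :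
    ∀ d, j + d ≤ J →
      100^d * (h.choose j * b.choose (m - j)) ≤ 51^d * (h.choose (j+d) * b.choose (m - (j+d))) := by
  intro d
  induction d with
  | zero => simp
  | succ d ih =>
    intro hd
    have ih' := ih (by omega)
    have hstep := aux_step n h b m (j+d) J hhb hbh hmn (by omega) hJ (by omega)
    calc 100^(d+1) * (h.choose j * b.choose (m - j))
        = 100 * (100^d * (h.choose j * b.choose (m - j))) := by ring
      _ ≤ 100 * (51^d * (h.choose (j+d) * b.choose (m - (j+d)))) := Nat.mul_le_mul_left _ ih'
      _ = 51^d * (100 * (h.choose (j+d) * b.choose (m - (j+d)))) := by ring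
      _ ≤ 51^d * (51 * (h.choose (j+d+1) * b.choose (m - (j+d) - 1))) :=
          Nat.mul_le_mul_left _ hstep
      _ = 51^(d+1) * (h.choose (j+(d+1)) * b.choose (m - (j+(d+1)))) := by
          rw [show m - (j+d) - 1 = m - (j+(d+1)) by omega, show j+d+1 = j+(d+1) by omega]
          ring

-- real version: c_j ≤ (51/100)^d * c_{j+d}
lemma aux_chain_real (n h b m J : ℕ) (hhb : h + b = n) (hbh : b ≤ h) (hmn : m ≤ n) (hJ : 3*J ≤ m)
    (j d : ℕ) (hjb : m ≤ b + j + 1) (hd : j + d ≤ J) :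
    ((h.choose j * b.choose (m - j) : ℕ) : ℝ)
      ≤ (51/100 : ℝ)^d * ((h.choose (j+d) * b.choose (m - (j+d)) : ℕ) : ℝ) := by
  have := aux_chain n h b m J hhb hbh hmn hJ j hjb d hd
  have hcast : ((100:ℝ))^d * ((h.choose j * b.choose (m - j) : ℕ) : ℝ)
      ≤ (51:ℝ)^d * ((h.choose (j+d) * b.choose (m - (j+d)) : ℕ) : ℝ) := by
    exact_mod_cast this
  rw [div_pow]
  calc ((h.choose j * b.choose (m - j) : ℕ) : ℝ)
      = (100:ℝ)^d * ((h.choose j * b.choose (m - j) : ℕ) : ℝ) / (100:ℝ)^d := by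
        field_simp
    _ ≤ (51:ℝ)^d * ((h.choose (j+d) * b.choose (m - (j+d)) : ℕ) : ℝ) / (100:ℝ)^d := by
        gcongr
    _ = (51:ℝ)^d / (100:ℝ)^d * ((h.choose (j+d) * b.choose (m - (j+d)) : ℕ) : ℝ) := by ring

lemma aux_analytic (n m : ℕ) (hn : 1024 ≤ n) (hmn : m ≤ n)
    (hm : 2 * Real.sqrt (n * Real.log n) ≤ (m : ℝ)) :
    6.93 ≤ Real.log n ∧ Real.log n ≤ (n:ℝ)/1096 + 6 ∧
      (m:ℝ)^2 ≥ 4*((n:ℝ)*Real.log n) ∧ 18*Real.log n + 27 ≤ (m:ℝ) := by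
  have hn0 : (0:ℝ) < n := by positivity
  have hn1024 : (1024:ℝ) ≤ n := by exact_mod_cast hn
  have hL1 : 6.93 ≤ Real.log n := by
    have h2 : Real.log 1024 = 10 * Real.log 2 := by
      rw [show (1024:ℝ) = 2^10 by norm_num, Real.log_pow]; push_cast; ring
    have := Real.log_le_log (by norm_num) hn1024
    have hl2 := Real.log_two_gt_d9
    rw [h2] at this
    nlinarith
  have hL2 : Real.log n ≤ (n:ℝ)/1096 + 6 := by
    have he7 : (1096:ℝ) ≤ Real.exp 7 := by
      have h1 : (2.7182818283:ℝ)^(7:ℕ) ≤ (Real.exp 1)^(7:ℕ) := by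
        apply pow_le_pow_left₀ (by norm_num) (le_of_lt Real.exp_one_gt_d9)
      have h2 : Real.exp 7 = (Real.exp 1)^(7:ℕ) := by
        rw [← Real.exp_nat_mul]; norm_num
      nlinarith
    have hne : Real.exp 7 ≠ 0 := (Real.exp_pos 7).ne'
    have hd : Real.log ((n:ℝ)/Real.exp 7) ≤ (n:ℝ)/Real.exp 7 - 1 :=
      Real.log_le_sub_one_of_pos (by positivity)
    have hsplit : Real.log ((n:ℝ)/Real.exp 7) = Real.log n - 7 := by
      rw [Real.log_div (by positivity) hne, Real.log_exp]
    have hdd : (n:ℝ)/Real.exp 7 ≤ (n:ℝ)/1096 := by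
      apply div_le_div_of_nonneg_left (by positivity) (by norm_num) he7
    linarith
  have hnL : (0:ℝ) ≤ (n:ℝ) * Real.log n := by nlinarith
  have hm2 : (m:ℝ)^2 ≥ 4*((n:ℝ)*Real.log n) := by
    have h1 : (2 * Real.sqrt ((n:ℝ) * Real.log n))^2 ≤ (m:ℝ)^2 := by
      apply pow_le_pow_left₀ (by positivity) hm
    rw [mul_pow, Real.sq_sqrt hnL] at h1
    linarith
  have hn81 : (81:ℝ)*Real.log n + 278 ≤ n := by nlinarith
  have hm27 : 18*Real.log n + 27 ≤ (m:ℝ) := by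
    have key : (18*Real.log n + 27)^2 ≤ 4*((n:ℝ)*Real.log n) := by nlinarith
    nlinarith [Nat.cast_nonneg (α := ℝ) m]
  exact ⟨hL1, hL2, hm2, hm27⟩


lemma aux_r_exp : (51/100 : ℝ) ≤ Real.exp (-(2/3)) := by
  have hexp23 : Real.exp (2/3) ≤ 100/51 := by
    have h2 : (Real.exp (2/3))^(3:ℕ) = Real.exp 2 := by
      rw [← Real.exp_nat_mul]; norm_num
    have h3 : Real.exp 2 = (Real.exp 1)^(2:ℕ) := by
      rw [← Real.exp_nat_mul]; norm_num
    have he := Real.exp_one_lt_d9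
    have hcube : (Real.exp (2/3))^(3:ℕ) ≤ (100/51:ℝ)^(3:ℕ) := by
      rw [h2, h3]
      nlinarith [Real.exp_pos 1]
    exact le_of_pow_le_pow_left₀ (by norm_num) (by norm_num) hcube
  rw [Real.exp_neg]
  have h1 : (1:ℝ)/(100/51) ≤ 1/(Real.exp (2/3)) :=
    one_div_le_one_div_of_le (Real.exp_pos _) hexp23
  rw [← one_div]
  linarith

lemma aux_exp5149 : Real.exp (-(51/49)) ≤ 49/100 := by
  have hge : (100/49:ℝ) ≤ Real.exp (51/49) := by
    have := Real.add_one_le_exp (51/49 : ℝ)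
    linarith
  rw [Real.exp_neg]
  have h1 : 1/(Real.exp (51/49)) ≤ (1:ℝ)/(100/49) :=
    one_div_le_one_div_of_le (by norm_num) hge
  rw [← one_div]
  linarith

set_option maxHeartbeats 1600000 in
/-- Lemma `common-referee`: if `R` and `S` are two independent uniformly random
`m`-element subsets of `Fin n` with `m ≥ 2√(n log n)`, and `H` is a fixed set of
honest nodes with `|H| ≥ n/2`, then `Pr[(R ∩ S ∩ H).Nonempty] ≥ 1 - 2/n`. -/
theorem common_referee (n : ℕ) (hn : 1024 ≤ n)
    (H : Finset (Fin n)) (hH : (n : ℝ) / 2 ≤ (H.card : ℝ))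
    (m : ℕ) (hmn : m ≤ n)
    (hm : 2 * Real.sqrt (n * Real.log n) ≤ (m : ℝ)) :
    1 - 2 / (n : ℝ) ≤
      ((((Finset.powersetCard m (Finset.univ : Finset (Fin n))) ×ˢ
            (Finset.powersetCard m (Finset.univ : Finset (Fin n)))).filter
          (fun RS => (RS.1 ∩ RS.2 ∩ H).Nonempty)).card : ℝ)
        / ((((Finset.powersetCard m (Finset.univ : Finset (Fin n))) ×ˢ
            (Finset.powersetCard m (Finset.univ : Finset (Fin n)))).card : ℝ)) := by
  classical
  have hn0 : (0:ℝ) < n := by positivity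
  obtain ⟨hL1, hL2, hm2, hm27⟩ := aux_analytic n m hn hmn hm
  set L := Real.log n with hLdef
  have hmpos : 0 < m := by
    by_contra hc
    push_neg at hc
    interval_cases m
    simp at hm27
    nlinarith
  have hmr : (0:ℝ) < m := by exact_mod_cast hmpos
  -- cardinal setup
  set Ω := Finset.powersetCard m (Finset.univ : Finset (Fin n)) with hΩdef
  have hNcard : Ω.card = n.choose m := by
    rw [Finset.card_powersetCard, Finset.card_univ, Fintype.card_fin]
  set N := n.choose m with hNdef
  have hNpos : 0 < N := Nat.choose_pos hmn
  have hNr : (0:ℝ) < N := by exact_mod_cast hNpos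
  -- h, b
  set hh := H.card with hhdef
  have hhn : hh ≤ n := by
    have := Finset.card_le_univ H
    simpa using this
  set b := n - hh with hbdef
  have hhb : hh + b = n := by omega
  have hbh : b ≤ hh := by
    have : (n:ℝ) ≤ 2 * hh := by linarith
    have : n ≤ 2 * hh := by exact_mod_cast this
    omega
  -- parameters k, J, E
  set k := ⌈((n:ℝ) * L) / m⌉₊ with hkdef
  set J := m / 3 with hJdef
  have hnL0 : (0:ℝ) ≤ (n:ℝ)*L := by nlinarith
  have hk_low : ((n:ℝ) * L) / m ≤ k := Nat.le_ceil _
  have hk_up : (k:ℝ) ≤ ((n:ℝ) * L) / m + 1 := (Nat.ceil_lt_add_one (by positivity)).le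
  have hnLm : ((n:ℝ) * L) / m ≤ (m:ℝ)/4 := by
    rw [div_le_div_iff₀ hmr (by norm_num)]
    nlinarith
  have hJ3 : 3 * J ≤ m := by omega
  have hJr : (m:ℝ)/3 - 2/3 ≤ (J:ℝ) := by
    have h1 : m ≤ 3 * J + 2 := by omega
    have h2 : (m:ℝ) ≤ 3 * (J:ℝ) + 2 := by exact_mod_cast h1
    linarith
  have hkJ : k ≤ J := by
    have hkr : (k:ℝ) ≤ (m:ℝ)/4 + 1 := by linarith
    have : (k:ℝ) ≤ (J:ℝ) := by nlinarith
    exact_mod_cast this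
  set E := J + 1 - k with hEdef
  have hEr : (m:ℝ)/12 - 2/3 ≤ (E:ℝ) := by
    have : (E:ℝ) = (J:ℝ) + 1 - (k:ℝ) := by
      have : E + k = J + 1 := by omega
      have := congrArg (Nat.cast : ℕ → ℝ) this
      push_cast at this
      linarith
    rw [this]
    linarith
  have hkm : k ≤ m := by omega
  have hkn : k ≤ n := by omega
  have hJm : J ≤ m := by omega
  -- key exponential bound : (51/100)^E * (100/49) ≤ 1/n
  have hr_exp := aux_r_exp
  have hEexp : (2/3 : ℝ) * E ≥ L + 51/49 := by
    linarith [hEr, hm27]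
  have hkey : (51/100 : ℝ)^E * (100/49) ≤ 1/n := by
    have h1 : (51/100:ℝ)^E ≤ Real.exp (-(2/3))^E :=
      pow_le_pow_left₀ (by norm_num) hr_exp E
    have h2 : Real.exp (-(2/3))^E = Real.exp ((E:ℝ) * (-(2/3))) := (Real.exp_nat_mul _ E).symm
    have h3 : Real.exp ((E:ℝ) * (-(2/3))) ≤ Real.exp (-(L + 51/49)) := by
      apply Real.exp_le_exp.mpr
      linarith [hEexp]
    have h4 : Real.exp (-(L + 51/49)) = Real.exp (-L) * Real.exp (-(51/49)) := by
      rw [← Real.exp_add]; ring_nf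
    have h5 : Real.exp (-L) = 1/n := by
      rw [Real.exp_neg, hLdef, Real.exp_log hn0, one_div]
    have h6 : Real.exp (-(51/49)) ≤ 49/100 := aux_exp5149
    calc (51/100 : ℝ)^E * (100/49)
        ≤ (Real.exp (-L) * Real.exp (-(51/49))) * (100/49) := by
          rw [← h4]
          apply mul_le_mul_of_nonneg_right _ (by norm_num)
          exact (h1.trans_eq h2).trans h3
      _ ≤ (1/n * (49/100)) * (100/49) := by
          rw [h5]
          apply mul_le_mul_of_nonneg_right _ (by norm_num)
          apply mul_le_mul_of_nonneg_left h6 (by positivity)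
      _ = 1/n := by ring
  -- Part A : single-set tail bound
  have hAsub : ∀ j, j < k → ((Ω.filter (fun R => (R ∩ H).card = j)).card : ℝ)
      ≤ (51/100:ℝ)^E * (51/100:ℝ)^(k-1-j) * N := by
    intro j hj
    have hjm : j ≤ m := by omega
    have hfib := aux_card_fiber n m j H hjm
    rw [← hhdef, ← hbdef, ← hΩdef] at hfib
    rw [hfib]
    by_cases hcase : m ≤ b + j
    · have hchain := aux_chain_real n hh b m J hhb hbh hmn hJ3 j (J-j) (by omega) (by omega)
      rw [show j + (J - j) = J by omega] at hchain
      have hcJ : ((hh.choose J * b.choose (m - J) : ℕ) : ℝ) ≤ N := by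
        have hfibJ := aux_card_fiber n m J H hJm
        rw [← hhdef, ← hbdef, ← hΩdef] at hfibJ
        rw [← hfibJ]
        have hle : (Ω.filter (fun R => (R ∩ H).card = J)).card ≤ Ω.card :=
          Finset.card_le_card (Finset.filter_subset _ _)
        rw [hNcard] at hle
        exact_mod_cast hle
      have hsplit : (51/100:ℝ)^(J - j) = (51/100:ℝ)^E * (51/100:ℝ)^(k-1-j) := by
        rw [← pow_add]
        congr 1
        omega
      calc ((hh.choose j * b.choose (m - j) : ℕ) : ℝ)
          ≤ (51/100:ℝ)^(J-j) * ((hh.choose J * b.choose (m - J) : ℕ) : ℝ) := by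
            exact_mod_cast hchain
        _ ≤ (51/100:ℝ)^(J-j) * N := by
            apply mul_le_mul_of_nonneg_left hcJ (by positivity)
        _ = (51/100:ℝ)^E * (51/100:ℝ)^(k-1-j) * N := by rw [hsplit]
    · have hz : b.choose (m - j) = 0 := Nat.choose_eq_zero_of_lt (by omega)
      rw [hz, Nat.mul_zero]
      push_cast
      positivity
  have haA : ((Ω.filter (fun R => (R ∩ H).card < k)).card : ℝ) ≤ (N:ℝ) / n := by
    have hff : ∀ j ∈ Finset.range k,
        Finset.filter (fun R => (R ∩ H).card = j) (Ω.filter (fun R => (R ∩ H).card < k))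
          = Ω.filter (fun R => (R ∩ H).card = j) := by
      intro j hj
      simp only [Finset.mem_range] at hj
      ext R
      simp only [Finset.mem_filter]
      constructor
      · rintro ⟨⟨h1, _⟩, h3⟩; exact ⟨h1, h3⟩
      · rintro ⟨h1, h3⟩; exact ⟨⟨h1, by omega⟩, h3⟩
    have hfib2 : (Ω.filter (fun R => (R ∩ H).card < k)).card
        = ∑ j ∈ Finset.range k, (Ω.filter (fun R => (R ∩ H).card = j)).card := by
      rw [Finset.card_eq_sum_card_fiberwise (f := fun R => (R ∩ H).card)
        (t := Finset.range k) (fun x hx => by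
          simp only [Finset.mem_coe, Finset.mem_filter] at hx
          exact Finset.mem_range.mpr hx.2)]
      exact Finset.sum_congr rfl (fun j hj => by rw [hff j hj])
    have hgeom : ∑ j ∈ Finset.range k, (51/100:ℝ)^j ≤ 100/49 := by
      rw [geom_sum_eq (by norm_num) k]
      rw [div_le_iff_of_neg (by norm_num)]
      have h0 : (0:ℝ) ≤ (51/100:ℝ)^k := by positivity
      linarith
    calc ((Ω.filter (fun R => (R ∩ H).card < k)).card : ℝ)
        = ∑ j ∈ Finset.range k, ((Ω.filter (fun R => (R ∩ H).card = j)).card : ℝ) := by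
          rw [hfib2]; push_cast; rfl
      _ ≤ ∑ j ∈ Finset.range k, (51/100:ℝ)^E * (51/100:ℝ)^(k-1-j) * N :=
          Finset.sum_le_sum (fun j hj => hAsub j (Finset.mem_range.mp hj))
      _ = (51/100:ℝ)^E * N * ∑ j ∈ Finset.range k, (51/100:ℝ)^(k-1-j) := by
          rw [Finset.mul_sum]
          exact Finset.sum_congr rfl (fun j _ => by ring)
      _ = (51/100:ℝ)^E * N * ∑ j ∈ Finset.range k, (51/100:ℝ)^j := by
          rw [Finset.sum_range_reflect (fun j => (51/100:ℝ)^j) k]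
      _ ≤ (51/100:ℝ)^E * N * (100/49) := by
          apply mul_le_mul_of_nonneg_left hgeom (by positivity)
      _ = ((51/100:ℝ)^E * (100/49)) * N := by ring
      _ ≤ (1/n) * N := mul_le_mul_of_nonneg_right hkey (le_of_lt hNr)
      _ = (N:ℝ)/n := by ring
  -- Part B : avoidance bound
  have hBchoose : ((n-k).choose m : ℝ) ≤ (N:ℝ)/n := by
    have h1 := aux_choose_shrink n m (by omega) hmn k hkn
    have hnm0 : (0:ℝ) ≤ ((n:ℝ)-m)/n := by
      apply div_nonneg _ (le_of_lt hn0)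
      have : (m:ℝ) ≤ n := by exact_mod_cast hmn
      linarith
    have hbase : (((n:ℝ)-m)/n) ≤ Real.exp (-((m:ℝ)/n)) := by
      have he := Real.add_one_le_exp (-((m:ℝ)/n))
      have heq : ((n:ℝ)-m)/n = 1 - (m:ℝ)/n := by field_simp
      rw [heq]
      linarith only [he]
    have hpow : (((n:ℝ)-m)/n)^k ≤ Real.exp (-((m:ℝ)/n))^k :=
      pow_le_pow_left₀ hnm0 hbase k
    have hexpk : Real.exp (-((m:ℝ)/n))^k = Real.exp ((k:ℝ) * -((m:ℝ)/n)) :=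
      (Real.exp_nat_mul _ k).symm
    have hle2 : Real.exp ((k:ℝ) * -((m:ℝ)/n)) ≤ Real.exp (-L) := by
      apply Real.exp_le_exp.mpr
      have h2 : (n:ℝ)*L ≤ (k:ℝ)*m := by
        rw [div_le_iff₀ hmr] at hk_low
        linarith
      rw [show (k:ℝ) * -((m:ℝ)/n) = -(((k:ℝ)*m)/n) by ring, neg_le_neg_iff, le_div_iff₀ hn0]
      linarith
    have hfin : Real.exp (-L) = 1/n := by
      rw [Real.exp_neg, hLdef, Real.exp_log hn0, one_div]
    calc ((n-k).choose m : ℝ) ≤ (((n:ℝ)-m)/n)^k * N := h1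
      _ ≤ (1/n) * N := by
          apply mul_le_mul_of_nonneg_right _ (le_of_lt hNr)
          calc (((n:ℝ)-m)/n)^k ≤ Real.exp (-((m:ℝ)/n))^k := hpow
            _ = Real.exp ((k:ℝ) * -((m:ℝ)/n)) := hexpk
            _ ≤ Real.exp (-L) := hle2
            _ = 1/n := hfin
      _ = (N:ℝ)/n := by ring
  -- pairs
  set P := Ω ×ˢ Ω with hPdef
  have hPcard : P.card = N * N := by rw [hPdef, Finset.card_product, hNcard]
  set bad := P.filter (fun RS => ¬ (RS.1 ∩ RS.2 ∩ H).Nonempty) with hbaddef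
  have hbadsub : bad ⊆ (P.filter (fun RS => (RS.1 ∩ H).card < k))
      ∪ (P.filter (fun RS => k ≤ (RS.1 ∩ H).card ∧ RS.2 ∩ (RS.1 ∩ H) = ∅)) := by
    intro RS hRS
    rw [hbaddef, Finset.mem_filter, Finset.not_nonempty_iff_eq_empty] at hRS
    obtain ⟨hPmem, hemp⟩ := hRS
    rw [Finset.mem_union, Finset.mem_filter, Finset.mem_filter]
    by_cases hc : (RS.1 ∩ H).card < k
    · exact Or.inl ⟨hPmem, hc⟩
    · refine Or.inr ⟨hPmem, by omega, ?_⟩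
      rw [← Finset.inter_assoc, Finset.inter_comm RS.2 RS.1]
      exact hemp
  have hcardA : (P.filter (fun RS => (RS.1 ∩ H).card < k)).card
      = (Ω.filter (fun R => (R ∩ H).card < k)).card * N := by
    have hprod : P.filter (fun RS => (RS.1 ∩ H).card < k)
        = (Ω.filter (fun R => (R ∩ H).card < k)) ×ˢ Ω := by
      ext RS
      simp only [hPdef, Finset.mem_filter, Finset.mem_product]
      tauto
    rw [hprod, Finset.card_product, hNcard]
  have hcardB : (P.filter (fun RS => k ≤ (RS.1 ∩ H).card ∧ RS.2 ∩ (RS.1 ∩ H) = ∅)).card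
      ≤ N * ((n-k).choose m) := by
    rw [Finset.card_eq_sum_card_fiberwise (f := Prod.fst) (t := Ω) (fun x hx => by
      rw [Finset.mem_coe, Finset.mem_filter, hPdef, Finset.mem_product] at hx
      exact hx.1.1)]
    calc ∑ R ∈ Ω, (Finset.filter (fun RS => RS.1 = R)
            (P.filter (fun RS => k ≤ (RS.1 ∩ H).card ∧ RS.2 ∩ (RS.1 ∩ H) = ∅))).card
        ≤ ∑ _R ∈ Ω, (n-k).choose m := by
          apply Finset.sum_le_sum
          intro R _
          set F := Finset.filter (fun RS => RS.1 = R)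
            (P.filter (fun RS => k ≤ (RS.1 ∩ H).card ∧ RS.2 ∩ (RS.1 ∩ H) = ∅)) with hFdef
          rcases Finset.eq_empty_or_nonempty F with he | hne
          · rw [he]; simp
          · obtain ⟨RS₀, hRS₀⟩ := hne
            rw [hFdef, Finset.mem_filter, Finset.mem_filter] at hRS₀
            obtain ⟨⟨_, hk₀, _⟩, hfst₀⟩ := hRS₀
            rw [hfst₀] at hk₀
            have hstep1 : F.card ≤ (Finset.powersetCard m ((R ∩ H)ᶜ)).card := by
              apply Finset.card_le_card_of_injOn Prod.snd
              · intro RS hRS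
                rw [hFdef, Finset.mem_coe, Finset.mem_filter, Finset.mem_filter] at hRS
                obtain ⟨⟨hPm, _, hdisj⟩, hfst⟩ := hRS
                rw [hPdef, Finset.mem_product] at hPm
                have hPm2 := hPm.2
                rw [hΩdef, Finset.mem_powersetCard] at hPm2
                rw [Finset.mem_coe, Finset.mem_powersetCard]
                refine ⟨?_, hPm2.2⟩
                intro x hx
                rw [Finset.mem_compl]
                intro hxRH
                have : x ∈ RS.2 ∩ (RS.1 ∩ H) := by
                  rw [Finset.mem_inter]
                  rw [hfst]
                  exact ⟨hx, hxRH⟩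
                rw [hdisj] at this
                exact absurd this (Finset.notMem_empty x)
              · intro x hx y hy hxy
                simp only [hFdef, Finset.coe_filter, Set.mem_setOf_eq] at hx hy
                have : x.1 = y.1 := by rw [hx.2, hy.2]
                exact Prod.ext this hxy
            have hstep2 : (Finset.powersetCard m ((R ∩ H)ᶜ)).card ≤ (n-k).choose m := by
              rw [Finset.card_powersetCard, Finset.card_compl, Fintype.card_fin]
              apply Nat.choose_le_choose
              omega
            exact le_trans hstep1 hstep2
      _ = N * ((n-k).choose m) := by
          rw [Finset.sum_const, hNcard, smul_eq_mul]
  -- assemble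
  have hbadcard : (bad.card : ℝ) ≤ 2/n * ((N:ℝ)*N) := by
    have h1 : bad.card ≤ (P.filter (fun RS => (RS.1 ∩ H).card < k)).card
        + (P.filter (fun RS => k ≤ (RS.1 ∩ H).card ∧ RS.2 ∩ (RS.1 ∩ H) = ∅)).card :=
      le_trans (Finset.card_le_card hbadsub) (Finset.card_union_le _ _)
    have h2 : (bad.card : ℝ) ≤ ((Ω.filter (fun R => (R ∩ H).card < k)).card : ℝ) * N
        + (N:ℝ) * ((n-k).choose m) := by
      have h3 : bad.card ≤ (Ω.filter (fun R => (R ∩ H).card < k)).card * N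
          + N * ((n-k).choose m) := by
        calc bad.card ≤ (P.filter (fun RS => (RS.1 ∩ H).card < k)).card
              + (P.filter (fun RS => k ≤ (RS.1 ∩ H).card ∧ RS.2 ∩ (RS.1 ∩ H) = ∅)).card := h1
          _ = (Ω.filter (fun R => (R ∩ H).card < k)).card * N
              + (P.filter (fun RS => k ≤ (RS.1 ∩ H).card ∧ RS.2 ∩ (RS.1 ∩ H) = ∅)).card := by
                rw [hcardA]
          _ ≤ (Ω.filter (fun R => (R ∩ H).card < k)).card * N + N * ((n-k).choose m) :=
                Nat.add_le_add_left hcardB _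
      exact_mod_cast h3
    calc (bad.card : ℝ) ≤ ((Ω.filter (fun R => (R ∩ H).card < k)).card : ℝ) * N
          + (N:ℝ) * ((n-k).choose m) := h2
      _ ≤ ((N:ℝ)/n) * N + (N:ℝ) * ((N:ℝ)/n) := by
          apply add_le_add
          · exact mul_le_mul_of_nonneg_right haA (le_of_lt hNr)
          · exact mul_le_mul_of_nonneg_left hBchoose (le_of_lt hNr)
      _ = 2/n * ((N:ℝ)*N) := by field_simp; ring
  have hgoodsplit := Finset.card_filter_add_card_filter_not
    (s := P) (p := fun RS => (RS.1 ∩ RS.2 ∩ H).Nonempty)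
  have hPr : (P.card : ℝ) = (N:ℝ)*N := by exact_mod_cast hPcard
  have hgood : ((P.filter (fun RS => (RS.1 ∩ RS.2 ∩ H).Nonempty)).card : ℝ)
      = (N:ℝ)*N - bad.card := by
    have : (P.filter (fun RS => (RS.1 ∩ RS.2 ∩ H).Nonempty)).card + bad.card = N * N := by
      rw [← hPcard, ← hgoodsplit, hbaddef]
    have := congrArg (Nat.cast : ℕ → ℝ) this
    push_cast at this
    linarith
  rw [le_div_iff₀ (by rw [hPr]; positivity)]
  rw [hPr, hgood]
  have h2n : (0:ℝ) < 2/n := by positivity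
  nlinarith [hbadcard, hNr, h2n]
end

section
/- Let n ≥ 1 and let X be a binomial random variable with m trials and success probability q such that m·q ≥ 4·log n. Then the probability that X < 2·log n is at most 1/√n. -/
lemma chernoff_real_aux (m : ℕ) (p a : ℝ) (hp0 : 0 ≤ p) (hp1 : p ≤ 1) :
    ∑ k ∈ Finset.range (m + 1),
        (if (k : ℝ) < a then p ^ k * (1 - p) ^ (m - k) * (m.choose k : ℝ) else 0)
      ≤ Real.exp (a * Real.log 2 - m * p / 2) := by
  have hp2 : (0:ℝ) ≤ p / 2 := by linarith
  have h1p : (0:ℝ) ≤ 1 - p := by linarith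
  have hterm : ∀ k ∈ Finset.range (m + 1),
      (if (k : ℝ) < a then p ^ k * (1 - p) ^ (m - k) * (m.choose k : ℝ) else 0)
        ≤ (2:ℝ) ^ a * ((p / 2) ^ k * (1 - p) ^ (m - k) * (m.choose k : ℝ)) := by
    intro k _
    have hnn : 0 ≤ (p / 2) ^ k * (1 - p) ^ (m - k) * (m.choose k : ℝ) :=
      mul_nonneg (mul_nonneg (pow_nonneg hp2 _) (pow_nonneg h1p _)) (Nat.cast_nonneg _)
    split_ifs with h
    · have h2k : (2:ℝ) ^ (k : ℕ) ≤ (2:ℝ) ^ a := by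
        rw [← Real.rpow_natCast 2 k]
        exact Real.rpow_le_rpow_of_exponent_le one_le_two h.le
      have hkey : (2:ℝ) ^ (k:ℕ) * (p / 2) ^ k = p ^ k := by
        rw [← mul_pow]; congr 1; ring
      calc p ^ k * (1 - p) ^ (m - k) * (m.choose k : ℝ)
          = (2:ℝ) ^ (k:ℕ) * ((p / 2) ^ k * (1 - p) ^ (m - k) * (m.choose k : ℝ)) := by
            rw [← mul_assoc, ← mul_assoc, hkey]
        _ ≤ _ := mul_le_mul_of_nonneg_right h2k hnn
    · exact mul_nonneg (Real.rpow_nonneg (by norm_num) _) hnn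
  calc ∑ k ∈ Finset.range (m + 1),
        (if (k : ℝ) < a then p ^ k * (1 - p) ^ (m - k) * (m.choose k : ℝ) else 0)
      ≤ ∑ k ∈ Finset.range (m + 1),
          (2:ℝ) ^ a * ((p / 2) ^ k * (1 - p) ^ (m - k) * (m.choose k : ℝ)) :=
        Finset.sum_le_sum hterm
    _ = (2:ℝ) ^ a * (p / 2 + (1 - p)) ^ m := by
        rw [← Finset.mul_sum, ← add_pow]
    _ = (2:ℝ) ^ a * (1 - p / 2) ^ m := by ring_nf
    _ ≤ Real.exp (a * Real.log 2) * Real.exp (-(p / 2)) ^ m := by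
        apply mul_le_mul
        · rw [Real.rpow_def_of_pos (by norm_num : (0:ℝ) < 2)]
          rw [mul_comm]
        · exact pow_le_pow_left₀ (by linarith) (by linarith [Real.add_one_le_exp (-(p/2))]) m
        · exact pow_nonneg (by linarith) m
        · positivity
    _ = Real.exp (a * Real.log 2 - m * p / 2) := by
        rw [← Real.exp_nat_mul, ← Real.exp_add]
        ring_nf
  
/-- Chernoff lower-tail estimate (inequality (2) of the common-referee lemma):
if `X` is binomial with `m` trials and success probability `q` with
`m·q ≥ 4·log n`, then `Pr[X < 2·log n] ≤ 1/√n`. -/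
theorem chernoff_lower_tail (n : ℕ) (hn : 1 ≤ n)
    (m : ℕ) (q : ENNReal) (hq1 : q ≤ 1)
    (hmq : 4 * Real.log n ≤ (m : ℝ) * q.toReal) :
    (PMF.binomial q.toNNReal
        (by simpa using ENNReal.toNNReal_mono ENNReal.one_ne_top hq1) m).toOuterMeasure
        {i : Fin (m + 1) | ((i : ℕ) : ℝ) < 2 * Real.log n}
      ≤ ENNReal.ofReal (1 / Real.sqrt n) := by
  set L := Real.log n with hLdef
  have hn0 : (0:ℝ) < n := by exact_mod_cast hn
  have hL : 0 ≤ L := Real.log_nonneg (by exact_mod_cast hn)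
  have hqt : q ≠ ⊤ := (hq1.trans_lt (by norm_num)).ne
  set p := q.toReal with hpdef
  have hp0 : 0 ≤ p := ENNReal.toReal_nonneg
  have hp1 : p ≤ 1 := by
    have := ENNReal.toReal_mono (by norm_num) hq1
    simpa using this
  -- identify each binomial value as ofReal of the real term
  have hq_eq : q = ENNReal.ofReal p := (ENNReal.ofReal_toReal hqt).symm
  have h1q : 1 - q = ENNReal.ofReal (1 - p) := by
    rw [hq_eq, ← ENNReal.ofReal_one, ← ENNReal.ofReal_sub _ hp0]
  have happ : ∀ i : Fin (m + 1),
      PMF.binomial q.toNNReal (by simpa using ENNReal.toNNReal_mono ENNReal.one_ne_top hq1) m i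
        = ENNReal.ofReal (p ^ (i:ℕ) * (1 - p) ^ (m - (i:ℕ)) * (m.choose (i:ℕ) : ℝ)) := by
    intro i
    have hq' : q.toNNReal ≤ 1 := by
      simpa using ENNReal.toNNReal_mono ENNReal.one_ne_top hq1
    refine (PMF.binomial_apply q.toNNReal hq' m i).trans ?_
    rw [Fin.val_last, ENNReal.coe_toNNReal hqt]
    rw [h1q, hq_eq, ← ENNReal.ofReal_pow hp0,
      ← ENNReal.ofReal_pow (by linarith), ← ENNReal.ofReal_natCast (m.choose (i:ℕ)),
      ← ENNReal.ofReal_mul (pow_nonneg hp0 _),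
      ← ENNReal.ofReal_mul (mul_nonneg (pow_nonneg hp0 _) (pow_nonneg (by linarith) _))]
  rw [PMF.toOuterMeasure_apply_fintype]
  have hsum : ∑ i : Fin (m+1),
      ({i : Fin (m + 1) | ((i : ℕ) : ℝ) < 2 * L}).indicator (PMF.binomial q.toNNReal (by simpa using ENNReal.toNNReal_mono ENNReal.one_ne_top hq1) m) i
      = ENNReal.ofReal (∑ k ∈ Finset.range (m + 1),
          (if (k : ℝ) < 2 * L then p ^ k * (1 - p) ^ (m - k) * (m.choose k : ℝ) else 0)) := by
    rw [ENNReal.ofReal_sum_of_nonneg (fun k _ => by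
        split_ifs
        · exact mul_nonneg (mul_nonneg (pow_nonneg hp0 _)
            (pow_nonneg (by linarith) _)) (Nat.cast_nonneg _)
        · exact le_refl 0),
      ← Fin.sum_univ_eq_sum_range
        (fun k => ENNReal.ofReal (if (k : ℝ) < 2 * L then
          p ^ k * (1 - p) ^ (m - k) * (m.choose k : ℝ) else 0)) (m+1)]
    refine Finset.sum_congr rfl fun i _ => ?_
    rw [Set.indicator_apply]
    split_ifs with h h' h'
    · rw [happ i]
    · exact absurd h h'
    · exact absurd h' h
    · simp
  rw [hsum]
  have hchern := chernoff_real_aux m p (2 * L) hp0 hp1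
  have hlog2 : Real.log 2 < 0.6931471808 := Real.log_two_lt_d9
  have hlog2' : 0 < Real.log 2 := Real.log_pos (by norm_num)
  have hexp : Real.exp (2 * L * Real.log 2 - m * p / 2) ≤ 1 / Real.sqrt n := by
    have hsqrt : Real.sqrt n = Real.exp (L / 2) := by
      rw [Real.sqrt_eq_rpow, Real.rpow_def_of_pos hn0, hLdef]
      ring_nf
    rw [hsqrt, one_div, ← Real.exp_neg]
    apply Real.exp_le_exp.2
    nlinarith [hmq]
  calc ENNReal.ofReal (∑ k ∈ Finset.range (m + 1),
          (if (k : ℝ) < 2 * L then p ^ k * (1 - p) ^ (m - k) * (m.choose k : ℝ) else 0))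
      ≤ ENNReal.ofReal (Real.exp (2 * L * Real.log 2 - m * p / 2)) :=
        ENNReal.ofReal_le_ofReal hchern
    _ ≤ ENNReal.ofReal (1 / Real.sqrt n) := ENNReal.ofReal_le_ofReal hexp
end

section
/- Let f and n be natural numbers with n ≥ 1, 2·f ≤ n and f² ≤ n. Then (1 − f/n)^f ≥ exp(−2·f²/n) ≥ exp(−2), and consequently 1 − (1 − f/n)^f ≤ 1 − exp(−2) < 0.87. Hence two nodes that each take at most √n uniform samples from an n-element set fail to have a common sample with probability at least exp(−2). -/
lemma exp_neg_two_mul_le {x : ℝ} (hx : 0 ≤ x) (hx2 : x ≤ 1/2) :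
    Real.exp (-2 * x) ≤ 1 - x := by
  have h1 : 1 + 2 * x ≤ Real.exp (2 * x) := by
    have := Real.add_one_le_exp (2 * x); linarith
  have hpos : (0:ℝ) < 1 + 2 * x := by linarith
  have key : (1 + 2 * x) * (1 - x) ≥ 1 := by nlinarith
  have hexp : Real.exp (-2 * x) = (Real.exp (2 * x))⁻¹ := by
    rw [← Real.exp_neg]; ring_nf
  rw [hexp]
  have h2 : (Real.exp (2 * x))⁻¹ ≤ (1 + 2 * x)⁻¹ := by
    apply inv_anti₀ hpos h1
  have h3 : (1 + 2 * x)⁻¹ ≤ 1 - x := by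
    rw [inv_eq_one_div, div_le_iff₀ hpos]; nlinarith
  linarith

/-- Corrected, honest version of the lower-bound lemma `know-each-other`:
if `2f ≤ n` and `f² ≤ n`, then `(1 - f/n)^f ≥ exp(-2f²/n) ≥ exp(-2)`, hence
`1 - (1 - f/n)^f ≤ 1 - exp(-2) < 0.87`. -/
theorem rendezvous_failure (f n : ℕ) (hn : 1 ≤ n) (h2f : 2 * f ≤ n)
    (hf2 : f ^ 2 ≤ n) :
    Real.exp (-2 * (f : ℝ) ^ 2 / (n : ℝ)) ≤ (1 - (f : ℝ) / (n : ℝ)) ^ f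
    ∧ Real.exp (-2) ≤ Real.exp (-2 * (f : ℝ) ^ 2 / (n : ℝ))
    ∧ 1 - (1 - (f : ℝ) / (n : ℝ)) ^ f ≤ 1 - Real.exp (-2)
    ∧ (1 : ℝ) - Real.exp (-2) < 0.87 := by
  have hnpos : (0:ℝ) < n := by exact_mod_cast hn
  have hfn : (f:ℝ) / n ≤ 1/2 := by
    rw [div_le_iff₀ hnpos]
    have : (2:ℝ) * f ≤ n := by exact_mod_cast h2f
    linarith
  have hfn0 : 0 ≤ (f:ℝ) / n := by positivity
  have h1 : Real.exp (-2 * (f:ℝ)^2 / n) ≤ (1 - (f:ℝ)/n) ^ f := by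
    have base := exp_neg_two_mul_le hfn0 hfn
    calc Real.exp (-2 * (f:ℝ)^2 / n) = Real.exp (-2 * ((f:ℝ)/n)) ^ f := by
          rw [← Real.exp_nat_mul]; ring_nf
      _ ≤ (1 - (f:ℝ)/n) ^ f := by
          apply pow_le_pow_left₀ (Real.exp_pos _).le base
  have h2 : Real.exp (-2) ≤ Real.exp (-2 * (f:ℝ)^2 / n) := by
    apply Real.exp_le_exp.mpr
    rw [neg_mul, neg_div, neg_le_neg_iff, div_le_iff₀ hnpos]
    have : (f:ℝ)^2 ≤ n := by exact_mod_cast hf2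
    nlinarith
  refine ⟨h1, h2, by linarith, ?_⟩
  have he : Real.exp 1 < 2.7182818286 := Real.exp_one_lt_d9
  have he0 : 0 < Real.exp 1 := Real.exp_pos 1
  have h2e : Real.exp 2 < 7.69 := by
    have : Real.exp 2 = Real.exp 1 * Real.exp 1 := by
      rw [← Real.exp_add]; norm_num
    nlinarith
  have : (0.13 : ℝ) < Real.exp (-2) := by
    rw [Real.exp_neg, lt_inv_comm₀ (by norm_num) (Real.exp_pos 2)]
    · linarith
  linarith
end
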